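/- Let d ≥ 2 be an integer, let α ≥ 0 and K be real numbers with 2 + αK ≠ 0, and let I ⊆ ℝ be an open interval. Suppose f : I → ℝ is differentiable, f(λ) > 0 and 2·f(λ) + αK ≠ 0 for all λ ∈ I, and f satisfies the implicit relation f(λ) = 1 − 2K(d−1)λ + (αK/2)·log|(2·f(λ) + αK)/(2 + αK)| for all λ ∈ I. Then for every λ ∈ I the derivative of f satisfies f′(λ) = −2(d−1)K − α(d−1)K²/f(λ). -/

import Mathlib

/-! Differentiating the implicit relation at `λ` gives the linear equation
`f' = -2(d-1)K + (αK/2) · 2f'/(2f + αK)` for `f'`, whose coefficient `2f/(2f + αK)` of `f'`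
is nonzero because `f > 0`; solving it yields the ODE. -/

open Filter Topology

theorem HasDerivAt.log_abs_div_const {u : ℝ → ℝ} {u' x c : ℝ} (hu : HasDerivAt u u' x)
    (hx : u x ≠ 0) (hc : c ≠ 0) :
    HasDerivAt (fun y => Real.log |u y / c|) (u' / u x) x := by
  simp_rw [Real.log_abs]
  convert (hu.div_const c).log (div_ne_zero hx hc) using 1
  field_simp

theorem eq_div_of_eq_add_mul_div {D s q y : ℝ} (hy : y ≠ 0) (hq : 2 * y + q ≠ 0)
    (h : D = s + q / 2 * (2 * D / (2 * y + q))) :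
    D = s * (2 * y + q) / (2 * y) := by
  field_simp at h ⊢
  linear_combination h

theorem rg2_constant_curvature_ode
    (d : ℕ) (α K : ℝ) (hαK : 2 + α * K ≠ 0)
    (a b : ℝ) (f : ℝ → ℝ)
    (hdiff : ∀ x ∈ Set.Ioo a b, DifferentiableAt ℝ f x)
    (hpos : ∀ x ∈ Set.Ioo a b, 0 < f x)
    (hne : ∀ x ∈ Set.Ioo a b, 2 * f x + α * K ≠ 0)
    (hrel : ∀ x ∈ Set.Ioo a b,
      f x = 1 - 2 * K * ((d : ℝ) - 1) * x
        + (α * K / 2) * Real.log (|(2 * f x + α * K) / (2 + α * K)|)) :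
    ∀ x ∈ Set.Ioo a b,
      deriv f x = -2 * ((d : ℝ) - 1) * K - α * ((d : ℝ) - 1) * K ^ 2 / f x := by
  intro x hx
  have hf := (hdiff x hx).hasDerivAt
  have hrhs : HasDerivAt (fun y => 1 - 2 * K * ((d : ℝ) - 1) * y
        + (α * K / 2) * Real.log (|(2 * f y + α * K) / (2 + α * K)|))
      (-2 * ((d : ℝ) - 1) * K + α * K / 2 * (2 * deriv f x / (2 * f x + α * K))) x := by
    refine ((((hasDerivAt_id x).const_mul (2 * K * ((d : ℝ) - 1))).const_sub 1).add
      ((((hf.const_mul 2).add_const (α * K)).log_abs_div_const (hne x hx) hαK).const_mul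
        (α * K / 2))).congr_deriv ?_
    ring
  have hf_eq : f =ᶠ[𝓝 x] _ := eventually_of_mem (isOpen_Ioo.mem_nhds hx) hrel
  have hslope := hf.unique (hrhs.congr_of_eventuallyEq hf_eq)
  rw [eq_div_of_eq_add_mul_div (hpos x hx).ne' (hne x hx) hslope]
  field_simp [(hpos x hx).ne']
  ring
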